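/- If a line passes through two closed balls of radius ε whose centers are at distance L > 0 apart, and 0 < 2ε/L ≤ 1, then the angle δ between the line's direction and the direction of the segment joining the centers satisfies sin δ ≤ 2ε/L. -/

import Mathlib

open Real InnerProductGeometry
open scoped RealInnerProductSpace

-- `sin (angle u v) * ‖v‖` is the distance from `v` to the line `ℝ ∙ u`, which contains `u`.
theorem sin_angle_mul_norm_le_norm_sub {V : Type*} [NormedAddCommGroup V] [InnerProductSpace ℝ V]
    (u v : V) : sin (angle u v) * ‖v‖ ≤ ‖v - u‖ := by
  rcases eq_or_ne u 0 with rfl | hu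
  · simp
  have hu_pos : 0 < ‖u‖ := norm_pos_iff.mpr hu
  -- `‖u‖² ‖v - u‖² - (‖u‖² ‖v‖² - ⟪u, v⟫²) = (⟪u, v⟫ - ‖u‖²)²`
  have hsq : ⟪u, u⟫ * ⟪v, v⟫ - ⟪u, v⟫ * ⟪u, v⟫ ≤ (‖u‖ * ‖v - u‖) ^ 2 := by
    rw [real_inner_self_eq_norm_sq, real_inner_self_eq_norm_sq, mul_pow, norm_sub_sq_real,
      real_inner_comm]
    nlinarith [sq_nonneg (⟪v, u⟫ - ‖u‖ ^ 2)]
  have h : sin (angle u v) * (‖u‖ * ‖v‖) ≤ ‖u‖ * ‖v - u‖ := by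
    rw [sin_angle_mul_norm_mul_norm]
    exact Real.sqrt_le_iff.mpr ⟨by positivity, hsq⟩
  exact le_of_mul_le_mul_left (by linarith [h]) hu_pos

theorem stmt_4_general (p q a b : EuclideanSpace ℝ (Fin 3)) (ε L : ℝ)
    (hL : 0 < L) (hpq : dist p q = L)
    (ha : a ∈ Metric.closedBall p ε) (hb : b ∈ Metric.closedBall q ε) :
    Real.sin (InnerProductGeometry.angle (b - a) (q - p)) ≤ 2 * ε / L := by
  have hqp : ‖q - p‖ = L := by rw [← dist_eq_norm, dist_comm, hpq]
  have hdisp : ‖(q - p) - (b - a)‖ ≤ 2 * ε :=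
    calc ‖(q - p) - (b - a)‖ = ‖(a - p) - (b - q)‖ := by congr 1; abel
      _ ≤ ‖a - p‖ + ‖b - q‖ := norm_sub_le _ _
      _ ≤ 2 * ε := by
        rw [← dist_eq_norm, ← dist_eq_norm]
        linarith [Metric.mem_closedBall.mp ha, Metric.mem_closedBall.mp hb]
  rw [le_div_iff₀ hL, ← hqp]
  exact (sin_angle_mul_norm_le_norm_sub _ _).trans hdisp

theorem stmt_4 (p q a b : EuclideanSpace ℝ (Fin 3)) (ε L : ℝ)
    (hL : 0 < L) (hε : 0 < ε) (hεL : 2 * ε ≤ L) (hpq : dist p q = L)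
    (ha : a ∈ Metric.closedBall p ε) (hb : b ∈ Metric.closedBall q ε)
    (hab : a ≠ b) :
    Real.sin (InnerProductGeometry.angle (b - a) (q - p)) ≤ 2 * ε / L :=
  stmt_4_general p q a b ε L hL hpq ha hb
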